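/- Let p, q be two demographic groups with node sets U_p, U_q. Suppose each node u has an embedding vector h_u of Euclidean norm at most 1. Suppose all nodes in U_p with an inter-group edge share a common embedding h̄, and likewise all nodes in U_q with an inter-group edge share the same h̄, where ‖h̄‖₂ ≤ 1. Let β_p = (fraction of nodes in U_p with at least one inter-group edge) and β_q similarly. Then the Euclidean norm of the difference of group mean embeddings satisfies ‖μ_p − μ_q‖₂ ≤ 2(1 − min(β_p, β_q)). -/

import Mathlib

/-! Subtracting `β • h̄` from a group mean leaves the average of the embeddings of the nodes without
inter-group edges, a fraction `1 - β` of the group, so `‖μ - β • h̄‖ ≤ 1 - β`. Comparing both means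
with multiples of `h̄` then gives `‖μp - μq‖ ≤ (1 - βp) + (1 - βq) + |βp - βq| = 2 (1 - min βp βq)`. -/

open Finset

section

variable {V E : Type*} [SeminormedAddCommGroup E] [NormedSpace ℝ E]

lemma Finset.sum_sub_card_smul_eq_sum_sdiff [DecidableEq V] (h : V → E) (c : E) {U S : Finset V}
    (hS : S ⊆ U) (hval : ∀ u ∈ S, h u = c) :
    ∑ u ∈ U, h u - (#S : ℝ) • c = ∑ u ∈ U \ S, h u := by
  rw [← sum_sdiff hS, sum_congr rfl hval, sum_const, Nat.cast_smul_eq_nsmul, add_sub_cancel_right]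

lemma norm_mean_sub_smul_le [DecidableEq V] (h : V → E) (c : E) {U S : Finset V}
    (hU : U.Nonempty) (hS : S ⊆ U) (hnorm : ∀ u ∈ U \ S, ‖h u‖ ≤ 1) (hval : ∀ u ∈ S, h u = c) :
    ‖(#U : ℝ)⁻¹ • ∑ u ∈ U, h u - ((#S : ℝ) / #U) • c‖ ≤ 1 - (#S : ℝ) / #U := by
  have hU₀ : (0 : ℝ) < #U := by exact_mod_cast hU.card_pos
  have hrest : ‖∑ u ∈ U \ S, h u‖ ≤ #U - #S := by
    calc ‖∑ u ∈ U \ S, h u‖ ≤ ∑ u ∈ U \ S, (1 : ℝ) := norm_sum_le_of_le _ hnorm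
      _ = #U - #S := by
        rw [sum_const, nsmul_one, card_sdiff_of_subset hS, Nat.cast_sub (card_le_card hS)]
  calc ‖(#U : ℝ)⁻¹ • ∑ u ∈ U, h u - ((#S : ℝ) / #U) • c‖
      = (#U : ℝ)⁻¹ * ‖∑ u ∈ U \ S, h u‖ := by
        rw [div_eq_inv_mul, mul_smul, ← smul_sub, sum_sub_card_smul_eq_sum_sdiff h c hS hval,
          norm_smul, Real.norm_of_nonneg (inv_nonneg.2 hU₀.le)]
    _ ≤ (#U : ℝ)⁻¹ * (#U - #S) := by gcongr
    _ = 1 - (#S : ℝ) / #U := by field_simp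

lemma norm_sub_le_of_norm_sub_smul_le (x y c : E) {a b : ℝ} (hc : ‖c‖ ≤ 1)
    (hx : ‖x - a • c‖ ≤ 1 - a) (hy : ‖y - b • c‖ ≤ 1 - b) :
    ‖x - y‖ ≤ 2 * (1 - min a b) := by
  have hmin : 2 * min a b = a + b - |b - a| := by
    rw [← two_nsmul_inf_eq_add_sub_abs_sub, nsmul_eq_mul, Nat.cast_ofNat]
  calc ‖x - y‖ = ‖(x - a • c) - (y - b • c) + (a - b) • c‖ := by
        rw [sub_smul]; abel_nf
    _ ≤ ‖x - a • c‖ + ‖y - b • c‖ + |a - b| * ‖c‖ := by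
        rw [← Real.norm_eq_abs, ← norm_smul (a - b) c]
        exact (norm_add_le _ _).trans (add_le_add_left (norm_sub_le _ _) _)
    _ ≤ (1 - a) + (1 - b) + |b - a| * 1 := by
        rw [abs_sub_comm]; gcongr
    _ = 2 * (1 - min a b) := by linarith

end

/-- Fairness bound (Theorem 4.1): if all nodes with inter-group edges share a common
embedding `hbar` (of norm at most 1), and all embeddings have norm at most 1, then the
group-mean embeddings differ by at most `2 * (1 - min β_p β_q)`. -/
theorem fairness_mean_embedding_bound
    {V : Type*} [DecidableEq V] {d : ℕ}
    (h : V → EuclideanSpace ℝ (Fin d)) (hbar : EuclideanSpace ℝ (Fin d))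
    (Up Uq Sp Sq : Finset V)
    (hUp : Up.Nonempty) (hUq : Uq.Nonempty)
    (hSp : Sp ⊆ Up) (hSq : Sq ⊆ Uq)
    (hnorm : ∀ u, ‖h u‖ ≤ 1) (hbarnorm : ‖hbar‖ ≤ 1)
    (hSpval : ∀ u ∈ Sp, h u = hbar) (hSqval : ∀ u ∈ Sq, h u = hbar)
    (βp βq : ℝ)
    (hβp : βp = (Sp.card : ℝ) / (Up.card : ℝ))
    (hβq : βq = (Sq.card : ℝ) / (Uq.card : ℝ))
    (μp μq : EuclideanSpace ℝ (Fin d))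
    (hμp : μp = ((Up.card : ℝ))⁻¹ • ∑ u ∈ Up, h u)
    (hμq : μq = ((Uq.card : ℝ))⁻¹ • ∑ u ∈ Uq, h u) :
    ‖μp - μq‖ ≤ 2 * (1 - min βp βq) := by
  have hp := norm_mean_sub_smul_le h hbar hUp hSp (fun u _ ↦ hnorm u) hSpval
  have hq := norm_mean_sub_smul_le h hbar hUq hSq (fun u _ ↦ hnorm u) hSqval
  rw [← hβp, ← hμp] at hp
  rw [← hβq, ← hμq] at hq
  exact norm_sub_le_of_norm_sub_smul_le μp μq hbar hbarnorm hp hq
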